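/- Let X = ℓ¹ with canonical basis (e_n), and define f_n : ℓ¹ → ℝ by f_n(x) = |⟨e_n, x⟩|^{1+1/n}. Then I_f(x) := Σ_n f_n(x) is finite and convex on ℓ¹, each f_n is Fréchet differentiable, I_f is Gâteaux differentiable at 0 with Gâteaux derivative 0, but I_f is not Fréchet differentiable at 0. -/

import Mathlib

/-!
Each `fn n` is a convex, differentiable function of a single coordinate, and the sum converges on
`ℓ¹` because `|x_n|^{1+1/(n+1)} ≤ |x_n|` once `|x_n| ≤ 1`. Along a line, `If (t • u)` equals
`|t| * ∑ |t|^{1/(n+1)} fn n u`, and the sum tends to `0` with `t` by dominated convergence, so the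
directional derivatives at `0` all vanish. A Fréchet derivative at `0` would therefore be `0`, but
on `h_k = e_k/(k+1)` the quotient `If h_k / ‖h_k‖ = (k+1)^{-1/(k+1)}` tends to `1`, not `0`.
-/

noncomputable section

/-- The Banach space `ℓ¹` of absolutely summable real sequences. -/
abbrev ellOne : Type := lp (fun _ : ℕ => ℝ) 1

/-- The integrand `f_n(x) = |⟨e_n, x⟩|^{1+1/n}`, indexed so that `fn n` corresponds to the
summand with exponent `1 + 1/(n+1)` (i.e. the paper's `f_{n+1}`). -/
def fn (n : ℕ) (x : ellOne) : ℝ := |x n| ^ ((1 : ℝ) + 1 / (n + 1))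

/-- `I_f(x) = Σ_n |x_n|^{1+1/n}`. -/
def If (x : ellOne) : ℝ := ∑' n : ℕ, fn n x

open Filter Topology Asymptotics

theorem Summable.abs_rpow_of_one_le {ι : Type*} {a p : ι → ℝ} (ha : Summable fun i => |a i|)
    (hp : ∀ i, 1 ≤ p i) : Summable fun i => |a i| ^ p i := by
  refine ha.of_norm_bounded_eventually ?_
  have h_small : ∀ᶠ i in cofinite, |a i| ≤ 1 :=
    ha.tendsto_cofinite_zero.eventually (eventually_le_nhds one_pos)
  filter_upwards [h_small] with i hi
  rw [Real.norm_of_nonneg (by positivity)]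
  exact Real.rpow_le_self_of_le_one (abs_nonneg _) hi (hp i)

theorem convexOn_norm_rpow {E : Type*} [NormedAddCommGroup E] [NormedSpace ℝ E] {p : ℝ}
    (hp : 1 ≤ p) : ConvexOn ℝ Set.univ fun x : E => ‖x‖ ^ p := by
  refine ⟨convex_univ, fun x _ y _ a b ha hb hab => ?_⟩
  calc ‖a • x + b • y‖ ^ p ≤ (a * ‖x‖ + b * ‖y‖) ^ p := by
        refine Real.rpow_le_rpow (norm_nonneg _) ?_ (by linarith)
        simpa [norm_smul, abs_of_nonneg ha, abs_of_nonneg hb] using norm_add_le (a • x) (b • y)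
    _ ≤ a • ‖x‖ ^ p + b • ‖y‖ ^ p :=
        (convexOn_rpow hp).2 (norm_nonneg x) (norm_nonneg y) ha hb hab

theorem ConvexOn.tsum {ι E : Type*} [AddCommMonoid E] [Module ℝ E] {s : Set E}
    (hs : Convex ℝ s) {f : ι → E → ℝ} (hf : ∀ i, ConvexOn ℝ s (f i))
    (hsum : ∀ x ∈ s, Summable fun i => f i x) : ConvexOn ℝ s fun x => ∑' i, f i x := by
  refine ⟨hs, fun x hx y hy a b ha hb hab => ?_⟩
  have hsx := (hsum x hx).mul_left a
  have hsy := (hsum y hy).mul_left b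
  calc ∑' i, f i (a • x + b • y) ≤ ∑' i, (a * f i x + b * f i y) :=
        (hsum _ (hs hx hy ha hb hab)).tsum_le_tsum (fun i => (hf i).2 hx hy ha hb hab)
          (hsx.add hsy)
    _ = a • ∑' i, f i x + b • ∑' i, f i y := by
        rw [hsx.tsum_add hsy, tsum_mul_left, tsum_mul_left, smul_eq_mul, smul_eq_mul]

theorem tendsto_tsum_abs_rpow_mul {ι : Type*} {c q : ι → ℝ} (hc : Summable c)
    (hq : ∀ i, 0 < q i) : Tendsto (fun t : ℝ => ∑' i, |t| ^ q i * c i) (𝓝 0) (𝓝 0) := by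
  have h_term (i : ι) : Tendsto (fun t : ℝ => |t| ^ q i * c i) (𝓝 0) (𝓝 0) := by
    have : Continuous fun t : ℝ => |t| ^ q i * c i :=
      (continuous_abs.rpow_const fun _ => Or.inr (hq i).le).mul continuous_const
    simpa [Real.zero_rpow (hq i).ne'] using this.tendsto 0
  have h_bound : ∀ᶠ t : ℝ in 𝓝 0, ∀ i, ‖|t| ^ q i * c i‖ ≤ |c i| := by
    filter_upwards [Metric.closedBall_mem_nhds (0 : ℝ) one_pos] with t ht i
    have ht1 : |t| ≤ 1 := by simpa using ht
    rw [norm_mul, Real.norm_of_nonneg (by positivity), Real.norm_eq_abs]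
    exact mul_le_of_le_one_left (abs_nonneg _)
      (Real.rpow_le_one (abs_nonneg t) ht1 (hq i).le)
  simpa using tendsto_tsum_of_dominated_convergence hc.abs h_term h_bound

theorem lp.summable_norm_of_one {α : Type*} {E : α → Type*} [∀ i, NormedAddCommGroup (E i)]
    (x : lp E 1) : Summable fun i => ‖x i‖ := by
  simpa using (lp.memℓp x).summable (p := 1) (by norm_num)

lemma fn_nonneg (n : ℕ) (x : ellOne) : 0 ≤ fn n x := by
  unfold fn; positivity

lemma fn_eq_comp_evalCLM (n : ℕ) :
    fn n = (fun t : ℝ => ‖t‖ ^ ((1 : ℝ) + 1 / (n + 1))) ∘ lp.evalCLM ℝ (fun _ : ℕ => ℝ) 1 n :=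
  rfl

lemma one_le_exponent (n : ℕ) : (1 : ℝ) ≤ 1 + 1 / (n + 1) := by
  have : (0 : ℝ) ≤ 1 / (n + 1) := by positivity
  linarith

lemma summable_fn (x : ellOne) : Summable fun n => fn n x :=
  Summable.abs_rpow_of_one_le (lp.summable_norm_of_one x) one_le_exponent

lemma convexOn_fn (n : ℕ) : ConvexOn ℝ Set.univ (fn n) := by
  rw [fn_eq_comp_evalCLM]
  exact (convexOn_norm_rpow (one_le_exponent n)).comp_linearMap _

lemma convexOn_If : ConvexOn ℝ Set.univ If :=
  ConvexOn.tsum convex_univ convexOn_fn fun x _ => summable_fn x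

lemma differentiable_fn (n : ℕ) : Differentiable ℝ (fn n) := by
  have h_one_lt : (1 : ℝ) < 1 + 1 / (n + 1) := by simp only [lt_add_iff_pos_right]; positivity
  rw [fn_eq_comp_evalCLM]
  simp only [Real.norm_eq_abs]
  exact Differentiable.comp (fun t => (hasDerivAt_abs_rpow t h_one_lt).differentiableAt)
    (lp.evalCLM ℝ (fun _ : ℕ => ℝ) 1 n).differentiable

lemma fn_smul (n : ℕ) (t : ℝ) (u : ellOne) :
    fn n (t • u) = |t| * (|t| ^ (1 / (n + 1 : ℝ)) * fn n u) := by
  rw [fn, fn, lp.coeFn_smul, Pi.smul_apply, smul_eq_mul, abs_mul,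
    Real.mul_rpow (abs_nonneg _) (abs_nonneg _), Real.rpow_add' (abs_nonneg _), Real.rpow_one,
    mul_assoc]
  positivity

lemma If_nonneg (x : ellOne) : 0 ≤ If x :=
  tsum_nonneg fun n => fn_nonneg n x

lemma If_smul (t : ℝ) (u : ellOne) :
    If (t • u) = |t| * ∑' n : ℕ, |t| ^ (1 / (n + 1 : ℝ)) * fn n u := by
  simp only [If, fn_smul, tsum_mul_left]

lemma If_zero : If 0 = 0 := by
  simpa using If_smul 0 0

lemma hasDerivAt_If_smul (u : ellOne) : HasDerivAt (fun t : ℝ => If (t • u)) 0 0 := by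
  have h_tail : (fun t : ℝ => ∑' n : ℕ, |t| ^ (1 / (n + 1 : ℝ)) * fn n u) =o[𝓝 0]
      fun _ => (1 : ℝ) :=
    (isLittleO_one_iff ℝ).2 (tendsto_tsum_abs_rpow_mul (summable_fn u) fun n => by positivity)
  rw [hasDerivAt_iff_isLittleO_nhds_zero]
  simpa [If_smul, If_zero] using (isBigO_refl (fun t : ℝ => t) _).norm_left.mul_isLittleO h_tail

lemma If_single (k : ℕ) (a : ℝ) : If (lp.single 1 k a) = |a| ^ ((1 : ℝ) + 1 / (k + 1)) := by
  rw [If, tsum_eq_single k fun m hm => ?_]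
  · rw [fn, lp.single_apply_self]
  · rw [fn, lp.single_apply_ne 1 k _ hm, abs_zero, Real.zero_rpow (by positivity)]

lemma norm_inv_mul_If_single (k : ℕ) {a : ℝ} (ha : a ≠ 0) :
    ‖(lp.single 1 k a : ellOne)‖⁻¹ * If (lp.single 1 k a) = |a| ^ (1 / (k + 1 : ℝ)) := by
  rw [If_single, lp.norm_single one_pos, Real.norm_eq_abs,
    Real.rpow_add (abs_pos.2 ha), Real.rpow_one, inv_mul_cancel_left₀ (abs_ne_zero.2 ha)]

lemma eq_zero_of_hasFDerivAt_If {L : ellOne →L[ℝ] ℝ} (hL : HasFDerivAt If L 0) : L = 0 :=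
  ContinuousLinearMap.ext fun u =>
    (hL.hasLineDerivAt u).unique (by simpa [HasLineDerivAt] using hasDerivAt_If_smul u)

lemma not_differentiableAt_If_zero : ¬ DifferentiableAt ℝ If 0 := by
  intro hd
  have hL := hd.hasFDerivAt
  rw [eq_zero_of_hasFDerivAt_If hL, hasFDerivAt_iff_tendsto] at hL
  set a : ℕ → ℝ := fun k => 1 / ((k : ℝ) + 1)
  have ha : Tendsto a atTop (𝓝 0) := tendsto_one_div_add_atTop_nhds_zero_nat
  have hx : Tendsto (fun k => (lp.single 1 k (a k) : ellOne)) atTop (𝓝 0) := by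
    rw [tendsto_zero_iff_norm_tendsto_zero]
    simpa [lp.norm_single] using ha.abs
  have h_ratio (k : ℕ) : |a k| ^ (1 / (k + 1 : ℝ)) = (((k : ℝ) + 1) ^ (1 / (k + 1 : ℝ)))⁻¹ := by
    rw [abs_of_pos (by positivity), Real.div_rpow zero_le_one (by positivity), Real.one_rpow,
      one_div]
  have h_one : Tendsto (fun k : ℕ => (((k : ℝ) + 1) ^ (1 / (k + 1 : ℝ)))⁻¹) atTop (𝓝 1) := by
    simpa using (tendsto_rpow_div.comp
      (tendsto_atTop_add_const_right _ 1 tendsto_natCast_atTop_atTop)).inv₀ one_ne_zero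
  refine one_ne_zero (tendsto_nhds_unique h_one ?_)
  convert hL.comp hx using 2 with k
  have ha_ne : a k ≠ 0 := by positivity
  rw [Function.comp_apply, ← h_ratio, ← norm_inv_mul_If_single k ha_ne]
  simp only [sub_zero, If_zero, zero_apply, Real.norm_of_nonneg (If_nonneg _)]

/-- `I_f` is finite (the series converges) and convex on `ℓ¹`, each `f_n` is Fréchet
differentiable, `I_f` is Gâteaux differentiable at `0` with Gâteaux derivative `0`, but
`I_f` is not Fréchet differentiable at `0`. -/
theorem If_gateaux_not_frechet :
    (∀ x : ellOne, Summable (fun n : ℕ => fn n x)) ∧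
    ConvexOn ℝ Set.univ If ∧
    (∀ n : ℕ, Differentiable ℝ (fn n)) ∧
    (∀ u : ellOne, HasDerivAt (fun t : ℝ => If (t • u)) 0 0) ∧
    ¬ DifferentiableAt ℝ If 0 :=
  ⟨summable_fn, convexOn_If, differentiable_fn, hasDerivAt_If_smul, not_differentiableAt_If_zero⟩
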